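/- arXiv:1507.03713 — 5 statements merged into one kernel-verified Lean document; each statement's English description precedes it below -/
import Mathlib

section
/- Let f : ℝ^n → ℝ be convex differentiable with L-Lipschitz gradient (restricted to direction t), let Ψ be convex, F = f + Ψ, ℓ(t) = f(x) + ⟨∇f(x), t⟩ + Ψ(x+t), θ ∈ (0,1), λ ≤ L with λ > 0. Suppose ℓ(0) - ℓ(t) > (λ/2)‖t‖². Then for every α with 0 < α ≤ (1-θ)λ/L, the sufficient decrease condition F(x) - F(x + αt) ≥ θ(ℓ(0) - ℓ(αt)) holds. -/
/-!
Along the segment from `x` to `x + α t`, the Lipschitz bound on `∇f` gives the descent inequality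
`f (x + α t) ≤ f x + α ⟪∇f x, t⟫ + (L/2) α² ‖t‖²`, so the true decrease of `F` falls short of the
model decrease `ℓ 0 - ℓ (α t)` by at most `(L/2) α² ‖t‖²`. Convexity of `Ψ` makes the model
decrease at least `α (ℓ 0 - ℓ t) > α (λ/2) ‖t‖²`, and `α L ≤ (1 - θ) λ` turns this into
`(L/2) α² ‖t‖² ≤ (1 - θ) (ℓ 0 - ℓ (α t))`.
-/

open scoped RealInnerProductSpace

open Set

theorem ConvexOn.apply_add_smul_le {𝕜 E : Type*} [Field 𝕜] [LinearOrder 𝕜] [IsStrictOrderedRing 𝕜]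
    [AddCommGroup E] [Module 𝕜 E] {s : Set E} {Ψ : E → 𝕜} (hΨ : ConvexOn 𝕜 s Ψ) {x t : E}
    (hx : x ∈ s) (hxt : x + t ∈ s) {α : 𝕜} (hα₀ : 0 ≤ α) (hα₁ : α ≤ 1) :
    Ψ (x + α • t) ≤ (1 - α) * Ψ x + α * Ψ (x + t) := by
  have h := hΨ.2 hx hxt (sub_nonneg.2 hα₁) hα₀ (sub_add_cancel 1 α)
  rw [smul_eq_mul, smul_eq_mul] at h
  convert h using 2
  module

section Gradient

variable {E : Type*} [NormedAddCommGroup E] [InnerProductSpace ℝ E] [CompleteSpace E]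
  {f : E → ℝ} {x t : E}

theorem DifferentiableAt.hasDerivAt_comp_add_smul {s : ℝ} (hf : DifferentiableAt ℝ f (x + s • t)) :
    HasDerivAt (fun r : ℝ => f (x + r • t)) ⟪gradient f (x + s • t), t⟫ s := by
  have hline : HasDerivAt (fun r : ℝ => x + r • t) t s := by
    simpa using ((hasDerivAt_id s).smul_const t).const_add x
  exact (hf.hasGradientAt.hasFDerivAt.comp_hasDerivAt s hline).congr_deriv (by simp)

theorem image_add_smul_le_of_norm_gradient_sub_le (hf : Differentiable ℝ f) {L α : ℝ}
    (hα : 0 ≤ α)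
    (hLip : ∀ s ∈ Icc 0 α, ‖gradient f (x + s • t) - gradient f x‖ ≤ L * s * ‖t‖) :
    f (x + α • t) ≤ f x + α * ⟪gradient f x, t⟫ + L / 2 * α ^ 2 * ‖t‖ ^ 2 := by
  set g := gradient f x
  let φ : ℝ → ℝ := fun s => f (x + s • t) - s * ⟪g, t⟫ - L / 2 * s ^ 2 * ‖t‖ ^ 2
  have hφ : ∀ s, HasDerivAt φ (⟪gradient f (x + s • t) - g, t⟫ - L * s * ‖t‖ ^ 2) s := by
    intro s
    have h := (((hf (x + s • t)).hasDerivAt_comp_add_smul).sub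
      ((hasDerivAt_id s).mul_const ⟪g, t⟫)).sub
        (((hasDerivAt_pow 2 s).const_mul (L / 2)).mul_const (‖t‖ ^ 2))
    refine h.congr_deriv ?_
    rw [inner_sub_left]
    push_cast
    ring
  have hanti : AntitoneOn φ (Icc 0 α) := by
    refine antitoneOn_of_deriv_nonpos (convex_Icc 0 α)
      (fun s _ => (hφ s).continuousAt.continuousWithinAt)
      (fun s _ => (hφ s).differentiableAt.differentiableWithinAt) fun s hs => ?_
    rw [interior_Icc] at hs
    rw [(hφ s).deriv, sub_nonpos]
    calc ⟪gradient f (x + s • t) - g, t⟫ ≤ ‖gradient f (x + s • t) - g‖ * ‖t‖ :=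
          real_inner_le_norm _ _
      _ ≤ L * s * ‖t‖ * ‖t‖ := by gcongr; exact hLip s (Ioo_subset_Icc_self hs)
      _ = L * s * ‖t‖ ^ 2 := by ring
  have h := hanti (left_mem_Icc.2 hα) (right_mem_Icc.2 hα) hα
  simp only [φ, zero_smul, add_zero, zero_mul, sub_zero, ne_eq, OfNat.ofNat_ne_zero,
    not_false_eq_true, zero_pow, mul_zero] at h
  linarith

end Gradient

theorem stmt_6_general {n : ℕ} (f Ψ F : EuclideanSpace ℝ (Fin n) → ℝ)
    (hf : Differentiable ℝ f)
    (hΨ : ConvexOn ℝ Set.univ Ψ)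
    (hF : ∀ y, F y = f y + Ψ y)
    (x t : EuclideanSpace ℝ (Fin n)) (L lam θ : ℝ)
    (hθ : θ ∈ Set.Ioo (0 : ℝ) 1) (hlam : 0 < lam) (hlamL : lam ≤ L)
    (hLip : ∀ s ∈ Set.Icc (0 : ℝ) 1,
      ‖gradient f (x + s • t) - gradient f x‖ ≤ L * s * ‖t‖)
    (ℓ : EuclideanSpace ℝ (Fin n) → ℝ)
    (hℓ : ∀ u, ℓ u = f x + ⟪gradient f x, u⟫ + Ψ (x + u))
    (hdec : ℓ 0 - ℓ t > lam / 2 * ‖t‖ ^ 2) :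
    ∀ α : ℝ, 0 < α → α ≤ (1 - θ) * lam / L →
      F x - F (x + α • t) ≥ θ * (ℓ 0 - ℓ (α • t)) := by
  intro α hα hαle
  have hL : 0 < L := hlam.trans_le hlamL
  have hαL : α * L ≤ (1 - θ) * lam := (le_div_iff₀ hL).1 hαle
  have hα₁ : α ≤ 1 := by nlinarith [hθ.1]
  have hdescent := image_add_smul_le_of_norm_gradient_sub_le hf hα.le
    fun s hs => hLip s ⟨hs.1, hs.2.trans hα₁⟩
  have hΨα := hΨ.apply_add_smul_le (mem_univ x) (mem_univ (x + t)) hα.le hα₁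
  have hmodel_eq : ℓ 0 - ℓ (α • t) = Ψ x - Ψ (x + α • t) - α * ⟪gradient f x, t⟫ := by
    simp only [hℓ, inner_zero_right, add_zero, real_inner_smul_right]
    ring
  have hmodel : α * (lam / 2 * ‖t‖ ^ 2) ≤ ℓ 0 - ℓ (α • t) := by
    simp only [hℓ, inner_zero_right, add_zero] at hdec
    nlinarith
  have hquad : L / 2 * α ^ 2 * ‖t‖ ^ 2 ≤ (1 - θ) * (ℓ 0 - ℓ (α • t)) := by
    calc L / 2 * α ^ 2 * ‖t‖ ^ 2 = α * L * (α / 2 * ‖t‖ ^ 2) := by ring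
      _ ≤ (1 - θ) * lam * (α / 2 * ‖t‖ ^ 2) := by gcongr
      _ = (1 - θ) * (α * (lam / 2 * ‖t‖ ^ 2)) := by ring
      _ ≤ (1 - θ) * (ℓ 0 - ℓ (α • t)) := by gcongr; linarith [hθ.2]
  rw [hF, hF]
  linarith

/-- Line search acceptance: if `ℓ(0) - ℓ(t) > (λ/2)‖t‖²`, then every step size
`0 < α ≤ (1-θ)λ/L` satisfies the sufficient decrease condition
`F(x) - F(x + αt) ≥ θ(ℓ(0) - ℓ(αt))`. -/
theorem stmt_6 {n : ℕ} (f Ψ F : EuclideanSpace ℝ (Fin n) → ℝ)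
    (hf : Differentiable ℝ f) (hfconv : ConvexOn ℝ Set.univ f)
    (hΨ : ConvexOn ℝ Set.univ Ψ)
    (hF : ∀ y, F y = f y + Ψ y)
    (x t : EuclideanSpace ℝ (Fin n)) (L lam θ : ℝ)
    (hθ : θ ∈ Set.Ioo (0 : ℝ) 1) (hlam : 0 < lam) (hlamL : lam ≤ L)
    (hLip : ∀ s ∈ Set.Icc (0 : ℝ) 1,
      ‖gradient f (x + s • t) - gradient f x‖ ≤ L * s * ‖t‖)
    (ℓ : EuclideanSpace ℝ (Fin n) → ℝ)
    (hℓ : ∀ u, ℓ u = f x + ⟪gradient f x, u⟫ + Ψ (x + u))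
    (hdec : ℓ 0 - ℓ t > lam / 2 * ‖t‖ ^ 2) :
    ∀ α : ℝ, 0 < α → α ≤ (1 - θ) * lam / L →
      F x - F (x + α • t) ≥ θ * (ℓ 0 - ℓ (α • t)) :=
  stmt_6_general f Ψ F hf hΨ hF x t L lam θ hθ hlam hlamL hLip ℓ hℓ hdec
end

section
/- Under the same hypotheses, if additionally α ≥ α_* := (1-θ)λ/(2L) and the line search condition F(x) - F(x+αt) ≥ θ(ℓ(0) - ℓ(αt)) holds, then F(x) - F(x + αt) > θ(1-θ)·(λ²/(4L))·‖t‖². -/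
open scoped RealInnerProductSpace

/-!
The composite linearization `ℓ` is convex (affine plus a translate of `Ψ`), so its decrease
along the segment from `0` to `t` is at least proportional to the step:
`ℓ 0 - ℓ (α • t) ≥ α (ℓ 0 - ℓ t) > α λ/2 ‖t‖²`. The line search condition and the lower
bound on `α` then give the claim.
-/

theorem ConvexOn.mul_sub_le_sub_smul {E : Type*} [AddCommGroup E] [Module ℝ E]
    {s : Set E} {φ : E → ℝ} (hφ : ConvexOn ℝ s φ) {x t : E} (hx : x ∈ s) (hxt : x + t ∈ s)
    {α : ℝ} (hα0 : 0 ≤ α) (hα1 : α ≤ 1) :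
    α * (φ x - φ (x + t)) ≤ φ x - φ (x + α • t) := by
  have hcomb : (1 - α) • x + α • (x + t) = x + α • t := by module
  have := hφ.2 hx hxt (sub_nonneg.2 hα1) hα0 (sub_add_cancel 1 α)
  rw [hcomb, smul_eq_mul, smul_eq_mul] at this
  linarith

theorem convexOn_const_add_inner_add_comp_add {E : Type*} [NormedAddCommGroup E]
    [InnerProductSpace ℝ E] {Ψ : E → ℝ} (hΨ : ConvexOn ℝ Set.univ Ψ) (c : ℝ) (g x : E) :
    ConvexOn ℝ Set.univ (fun u => c + ⟪g, u⟫ + Ψ (x + u)) :=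
  ((convexOn_const c convex_univ).add ((innerₗ E g).convexOn convex_univ)).add
    (hΨ.translate_right x)

theorem stmt_7_general {n : ℕ} (f Ψ F : EuclideanSpace ℝ (Fin n) → ℝ)
    (hΨ : ConvexOn ℝ Set.univ Ψ)
    (x t : EuclideanSpace ℝ (Fin n)) (L lam θ : ℝ)
    (hθ : θ ∈ Set.Ioo (0 : ℝ) 1) (hlam : 0 < lam) (hlamL : lam ≤ L)
    (ℓ : EuclideanSpace ℝ (Fin n) → ℝ)
    (hℓ : ∀ u, ℓ u = f x + ⟪gradient f x, u⟫ + Ψ (x + u))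
    (hdec : ℓ 0 - ℓ t > lam / 2 * ‖t‖ ^ 2)
    (α : ℝ) (hα0 : 0 < α) (hα1 : α ≤ 1)
    (hαlb : α ≥ (1 - θ) * lam / (2 * L))
    (hls : F x - F (x + α • t) ≥ θ * (ℓ 0 - ℓ (α • t))) :
    F x - F (x + α • t) > θ * (1 - θ) * (lam ^ 2 / (4 * L)) * ‖t‖ ^ 2 := by
  obtain ⟨hθ0, -⟩ := hθ
  have hL : 0 < L := hlam.trans_le hlamL
  have hℓconv : ConvexOn ℝ Set.univ ℓ := by
    rw [show ℓ = _ from funext hℓ]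
    exact convexOn_const_add_inner_add_comp_add hΨ _ _ x
  have hℓray : α * (ℓ 0 - ℓ t) ≤ ℓ 0 - ℓ (α • t) := by
    simpa only [zero_add] using
      hℓconv.mul_sub_le_sub_smul (Set.mem_univ 0) (Set.mem_univ (0 + t)) hα0.le hα1
  calc F x - F (x + α • t) ≥ θ * (ℓ 0 - ℓ (α • t)) := hls
    _ ≥ θ * (α * (ℓ 0 - ℓ t)) := by gcongr
    _ > θ * (α * (lam / 2 * ‖t‖ ^ 2)) := by gcongr
    _ ≥ θ * ((1 - θ) * lam / (2 * L) * (lam / 2 * ‖t‖ ^ 2)) := by gcongr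
    _ = θ * (1 - θ) * (lam ^ 2 / (4 * L)) * ‖t‖ ^ 2 := by field_simp; ring

/-- Under the line search hypotheses, if additionally `α ≥ (1-θ)λ/(2L)` and the line
search condition `F(x) - F(x+αt) ≥ θ(ℓ(0) - ℓ(αt))` holds, then
`F(x) - F(x+αt) > θ(1-θ)(λ²/(4L))‖t‖²`. -/
theorem stmt_7 {n : ℕ} (f Ψ F : EuclideanSpace ℝ (Fin n) → ℝ)
    (hf : Differentiable ℝ f) (hfconv : ConvexOn ℝ Set.univ f)
    (hΨ : ConvexOn ℝ Set.univ Ψ)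
    (hF : ∀ y, F y = f y + Ψ y)
    (x t : EuclideanSpace ℝ (Fin n)) (L lam θ : ℝ)
    (hθ : θ ∈ Set.Ioo (0 : ℝ) 1) (hlam : 0 < lam) (hlamL : lam ≤ L)
    (hLip : ∀ s ∈ Set.Icc (0 : ℝ) 1,
      ‖gradient f (x + s • t) - gradient f x‖ ≤ L * s * ‖t‖)
    (ℓ : EuclideanSpace ℝ (Fin n) → ℝ)
    (hℓ : ∀ u, ℓ u = f x + ⟪gradient f x, u⟫ + Ψ (x + u))
    (hdec : ℓ 0 - ℓ t > lam / 2 * ‖t‖ ^ 2)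
    (α : ℝ) (hα0 : 0 < α) (hα1 : α ≤ 1)
    (hαlb : α ≥ (1 - θ) * lam / (2 * L))
    (hls : F x - F (x + α • t) ≥ θ * (ℓ 0 - ℓ (α • t))) :
    F x - F (x + α • t) > θ * (1 - θ) * (lam ^ 2 / (4 * L)) * ‖t‖ ^ 2 :=
  stmt_7_general f Ψ F hΨ x t L lam θ hθ hlam hlamL ℓ hℓ hdec α hα0 hα1 hαlb hls
end

section
/- Let prox_{Ψ*} : ℝ^n → ℝ^n be 1-Lipschitz (nonexpansive), let H be a symmetric matrix with ‖H‖ ≤ Λ, let g(t) = ∇f(x) + Ht + prox_{Ψ*}(x + t - ∇f(x) - Ht). If ‖g(t)‖ ≤ η‖g(0)‖ for some η ∈ [0,1), then ‖t‖ ≥ ((1-η)/(1 + 2Λ))·‖g(0)‖. -/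
open scoped RealInnerProductSpace

/-! The map `g` is `(1 + 2Λ)`-Lipschitz: its `H`-part moves by at most `Λ‖t‖`, and the argument
of the nonexpansive `p` moves by `t - H t`, of norm at most `(1 + Λ)‖t‖`. On the other hand `g`
has to move by at least `(1 - η)‖g 0‖` to reach a point with `‖g t‖ ≤ η‖g 0‖`. -/

theorem norm_sub_le_of_eq_add_add_lipschitz {E F : Type*} [SeminormedAddCommGroup E]
    [FunLike F E E] [AddMonoidHomClass F E E] {p : E → E} (hp : LipschitzWith 1 p) (H : F)
    {Λ : ℝ} (hH : ∀ v, ‖H v‖ ≤ Λ * ‖v‖) {a x : E} {g : E → E}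
    (hg : ∀ u, g u = a + H u + p (x + u - a - H u)) (u v : E) :
    ‖g u - g v‖ ≤ (1 + 2 * Λ) * ‖u - v‖ := by
  have hp_step : ‖p (x + u - a - H u) - p (x + v - a - H v)‖ ≤ ‖u - v - H (u - v)‖ := by
    have := hp.dist_le_mul (x + u - a - H u) (x + v - a - H v)
    rw [NNReal.coe_one, one_mul, dist_eq_norm, dist_eq_norm,
      show x + u - a - H u - (x + v - a - H v) = u - v - (H u - H v) by abel] at this
    rwa [map_sub]
  calc ‖g u - g v‖
      = ‖H (u - v) + (p (x + u - a - H u) - p (x + v - a - H v))‖ := by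
        rw [hg, hg, map_sub]; congr 1; abel
    _ ≤ ‖H (u - v)‖ + ‖u - v - H (u - v)‖ := (norm_add_le _ _).trans (by gcongr)
    _ ≤ ‖H (u - v)‖ + (‖u - v‖ + ‖H (u - v)‖) := by gcongr; exact norm_sub_le _ _
    _ ≤ (1 + 2 * Λ) * ‖u - v‖ := by linarith [hH (u - v)]

theorem div_mul_norm_le_of_norm_le_mul {E : Type*} [SeminormedAddCommGroup E] {a b : E}
    {η L r : ℝ} (hL : 0 < L) (hba : ‖b‖ ≤ η * ‖a‖) (hdist : ‖b - a‖ ≤ L * r) :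
    (1 - η) / L * ‖a‖ ≤ r := by
  rw [div_mul_eq_mul_div, div_le_iff₀ hL]
  linarith [norm_sub_norm_le a b, norm_sub_rev a b]

theorem stmt_8_general {n : ℕ} (p : EuclideanSpace ℝ (Fin n) → EuclideanSpace ℝ (Fin n))
    (hp : LipschitzWith 1 p)
    (H : EuclideanSpace ℝ (Fin n) →ₗ[ℝ] EuclideanSpace ℝ (Fin n))
    (Λ : ℝ) (hΛ : 0 ≤ Λ) (hHnorm : ∀ v, ‖H v‖ ≤ Λ * ‖v‖)
    (x gf t : EuclideanSpace ℝ (Fin n))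
    (g : EuclideanSpace ℝ (Fin n) → EuclideanSpace ℝ (Fin n))
    (hg : ∀ u, g u = gf + H u + p (x + u - gf - H u))
    (η : ℝ)
    (hstop : ‖g t‖ ≤ η * ‖g 0‖) :
    ‖t‖ ≥ (1 - η) / (1 + 2 * Λ) * ‖g 0‖ := by
  have hmove := norm_sub_le_of_eq_add_add_lipschitz hp H hHnorm hg t 0
  rw [sub_zero] at hmove
  exact div_mul_norm_le_of_norm_le_mul (by linarith) hstop hmove

/-- Inexactness lower bound on the step: if `p = prox_{Ψ*}` is nonexpansive,
`‖H‖ ≤ Λ`, `g(t) = ∇f(x) + Ht + p(x + t - ∇f(x) - Ht)` and `‖g(t)‖ ≤ η‖g(0)‖`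
with `η ∈ [0,1)`, then `‖t‖ ≥ ((1-η)/(1+2Λ))‖g(0)‖`. -/
theorem stmt_8 {n : ℕ} (p : EuclideanSpace ℝ (Fin n) → EuclideanSpace ℝ (Fin n))
    (hp : LipschitzWith 1 p)
    (H : EuclideanSpace ℝ (Fin n) →ₗ[ℝ] EuclideanSpace ℝ (Fin n))
    (hsymm : ∀ u v, ⟪H u, v⟫ = ⟪u, H v⟫)
    (Λ : ℝ) (hΛ : 0 ≤ Λ) (hHnorm : ∀ v, ‖H v‖ ≤ Λ * ‖v‖)
    (x gf t : EuclideanSpace ℝ (Fin n))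
    (g : EuclideanSpace ℝ (Fin n) → EuclideanSpace ℝ (Fin n))
    (hg : ∀ u, g u = gf + H u + p (x + u - gf - H u))
    (η : ℝ) (hη : η ∈ Set.Ico (0 : ℝ) 1)
    (hstop : ‖g t‖ ≤ η * ‖g 0‖) :
    ‖t‖ ≥ (1 - η) / (1 + 2 * Λ) * ‖g 0‖ :=
  stmt_8_general p hp H Λ hΛ hHnorm x gf t g hg η hstop
end

section
/- Let {ξ_k}_{k≥0} be a nonnegative nonincreasing sequence of random variables with ξ_{k+1} depending only on ξ_k, satisfying E[ξ_{k+1} | ξ_k] ≤ (1 - 1/c)·ξ_k whenever ξ_k ≥ ε, where c > 1 and 0 < ε < ξ_0 (ξ_0 deterministic). Then for any ρ ∈ (0,1) and any K ≥ c·ln(ξ_0/(ε ρ)), it holds that P(ξ_K ≤ ε) ≥ 1 - ρ. -/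
/-!
On the event `{ε ≤ ξ_k}`, which is `σ(ξ_k)`-measurable, the conditional decrease integrates to
`∫_{ε ≤ ξ_{k+1}} ξ_{k+1} ≤ (1 - 1/c) ∫_{ε ≤ ξ_k} ξ_k`, since `{ε ≤ ξ_{k+1}} ⊆ {ε ≤ ξ_k}` by
monotonicity. Iterating, `ε P(ε ≤ ξ_K) ≤ ∫_{ε ≤ ξ_K} ξ_K ≤ (1 - 1/c)^K ξ₀ ≤ e^{-K/c} ξ₀ ≤ ερ`
(Markov on the event, then the choice of `K`).
-/

open MeasureTheory

lemma one_sub_one_div_pow_mul_le_of_mul_log_le {a b c : ℝ} {K : ℕ} (ha : 0 < a) (hb : 0 < b)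
    (hc : 1 ≤ c) (hK : c * Real.log (a / b) ≤ K) : (1 - 1 / c) ^ K * a ≤ b := by
  have hc0 : 0 < c := one_pos.trans_le hc
  have hq : 0 ≤ 1 - 1 / c := sub_nonneg.2 (div_le_one_of_le₀ hc hc0.le)
  have hlog : Real.log (a / b) ≤ K / c := by rw [le_div_iff₀ hc0, mul_comm]; exact hK
  calc (1 - 1 / c) ^ K * a ≤ Real.exp (-(1 / c)) ^ K * a := by
        gcongr
        linarith [Real.add_one_le_exp (-(1 / c))]
    _ = Real.exp (-(K / c)) * a := by rw [← Real.exp_nat_mul]; ring_nf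
    _ ≤ Real.exp (-Real.log (a / b)) * a := by gcongr
    _ = b := by rw [Real.exp_neg, Real.exp_log (by positivity)]; field_simp

section LevelSetIntegral

variable {Ω : Type*} [MeasurableSpace Ω] {μ : Measure Ω} [IsFiniteMeasure μ] {ε q : ℝ}

lemma setIntegral_setOf_le_le_mul_of_condExp_le {X Y : Ω → ℝ} (hX : Measurable X)
    (hXi : Integrable X μ) (hYi : Integrable Y μ) (hY : 0 ≤ Y) (hYX : Y ≤ X)
    (hcond : ∀ᵐ ω ∂μ, ε ≤ X ω →
      (μ[Y | MeasurableSpace.comap X Real.measurableSpace]) ω ≤ q * X ω) :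
    ∫ ω in {ω | ε ≤ Y ω}, Y ω ∂μ ≤ q * ∫ ω in {ω | ε ≤ X ω}, X ω ∂μ := by
  have hA : MeasurableSet[MeasurableSpace.comap X Real.measurableSpace] {ω | ε ≤ X ω} :=
    ⟨Set.Ici ε, measurableSet_Ici, rfl⟩
  calc ∫ ω in {ω | ε ≤ Y ω}, Y ω ∂μ ≤ ∫ ω in {ω | ε ≤ X ω}, Y ω ∂μ :=
        setIntegral_mono_set hYi.integrableOn (ae_of_all _ hY)
          (Filter.Eventually.of_forall fun ω hω => le_trans hω (hYX ω))
    _ = ∫ ω in {ω | ε ≤ X ω}, (μ[Y | MeasurableSpace.comap X Real.measurableSpace]) ω ∂μ :=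
        (setIntegral_condExp hX.comap_le hYi hA).symm
    _ ≤ ∫ ω in {ω | ε ≤ X ω}, q * X ω ∂μ := by
        refine setIntegral_mono_ae_restrict integrable_condExp.integrableOn
          (hXi.const_mul q).integrableOn ?_
        rw [Filter.EventuallyLE, ae_restrict_iff' (hX.comap_le _ hA)]
        filter_upwards [hcond] with ω h hω using h hω
    _ = q * ∫ ω in {ω | ε ≤ X ω}, X ω ∂μ := integral_const_mul _ _

lemma setIntegral_setOf_le_le_pow_mul_of_condExp_le {ξ : ℕ → Ω → ℝ}
    (hmeas : ∀ k, Measurable (ξ k)) (hint : ∀ k, Integrable (ξ k) μ) (hnonneg : ∀ k, 0 ≤ ξ k)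
    (hmono : ∀ k, ξ (k + 1) ≤ ξ k) (hq : 0 ≤ q)
    (hcond : ∀ k, ∀ᵐ ω ∂μ, ε ≤ ξ k ω →
      (μ[ξ (k + 1) | MeasurableSpace.comap (ξ k) Real.measurableSpace]) ω ≤ q * ξ k ω)
    (k : ℕ) :
    ∫ ω in {ω | ε ≤ ξ k ω}, ξ k ω ∂μ ≤ q ^ k * ∫ ω in {ω | ε ≤ ξ 0 ω}, ξ 0 ω ∂μ := by
  induction k with
  | zero => simp
  | succ k ih =>
    calc _ ≤ q * ∫ ω in {ω | ε ≤ ξ k ω}, ξ k ω ∂μ :=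
          setIntegral_setOf_le_le_mul_of_condExp_le (hmeas k) (hint k) (hint (k + 1))
            (hnonneg (k + 1)) (hmono k) (hcond k)
      _ ≤ q * (q ^ k * ∫ ω in {ω | ε ≤ ξ 0 ω}, ξ 0 ω ∂μ) := by gcongr
      _ = _ := by ring

end LevelSetIntegral

/-- Linear-rate high-probability lemma: a nonnegative nonincreasing sequence of random
variables with conditional linear decrease by factor `(1 - 1/c)` on `{ξ_k ≥ ε}` satisfies
`P(ξ_K ≤ ε) ≥ 1 - ρ` for `K ≥ c ln(ξ₀/(ερ))`. -/
theorem stmt_14 {Ω : Type*} [MeasurableSpace Ω] (μ : Measure Ω) [IsProbabilityMeasure μ]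
    (ξ : ℕ → Ω → ℝ) (hmeas : ∀ k, Measurable (ξ k))
    (ξ0 c ε ρ : ℝ)
    (hdet : ∀ ω, ξ 0 ω = ξ0)
    (hnonneg : ∀ k ω, 0 ≤ ξ k ω)
    (hmono : ∀ k ω, ξ (k + 1) ω ≤ ξ k ω)
    (hc : 1 < c) (hε : 0 < ε) (hεξ0 : ε < ξ0)
    (hcond : ∀ k, ∀ᵐ ω ∂μ, ε ≤ ξ k ω →
      (μ[ξ (k + 1) | MeasurableSpace.comap (ξ k) Real.measurableSpace]) ω
        ≤ (1 - 1 / c) * ξ k ω)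
    (hρ : ρ ∈ Set.Ioo (0 : ℝ) 1)
    (K : ℕ) (hK : (K : ℝ) ≥ c * Real.log (ξ0 / (ε * ρ))) :
    1 - ρ ≤ (μ {ω | ξ K ω ≤ ε}).toReal := by
  have hbound : ∀ k ω, ξ k ω ≤ ξ0 := fun k ω => by
    induction k with
    | zero => exact (hdet ω).le
    | succ k ih => exact (hmono k ω).trans ih
  have hint : ∀ k, Integrable (ξ k) μ := fun k =>
    .of_bound (hmeas k).aestronglyMeasurable ξ0 <| ae_of_all _ fun ω => by
      rw [Real.norm_of_nonneg (hnonneg k ω)]; exact hbound k ω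
  have hA : MeasurableSet {ω | ε ≤ ξ K ω} := measurableSet_le measurable_const (hmeas K)
  have hmarkov : ε * μ.real {ω | ε ≤ ξ K ω} ≤ ∫ ω in {ω | ε ≤ ξ K ω}, ξ K ω ∂μ :=
    setIntegral_ge_of_const_le_real hA (measure_ne_top _ _) (fun _ hω => hω) (hint K).integrableOn
  have hinit : ∫ ω in {ω | ε ≤ ξ 0 ω}, ξ 0 ω ∂μ ≤ ξ0 :=
    calc _ ≤ ∫ ω, ξ 0 ω ∂μ := setIntegral_le_integral (hint 0) (ae_of_all _ (hnonneg 0))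
      _ = ξ0 := by simp [hdet]
  have hq : 0 ≤ 1 - 1 / c := sub_nonneg.2 (div_le_one_of_le₀ hc.le (by linarith))
  have hdecay := setIntegral_setOf_le_le_pow_mul_of_condExp_le hmeas hint hnonneg hmono hq hcond K
  have hrate := one_sub_one_div_pow_mul_le_of_mul_log_le (hε.trans hεξ0) (mul_pos hε hρ.1) hc.le hK
  have htail : μ.real {ω | ε ≤ ξ K ω} ≤ ρ := by
    refine le_of_mul_le_mul_left ?_ hε
    calc ε * μ.real {ω | ε ≤ ξ K ω} ≤ (1 - 1 / c) ^ K * ξ0 :=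
          hmarkov.trans (hdecay.trans (by gcongr))
      _ ≤ ε * ρ := hrate
  calc 1 - ρ ≤ μ.real {ω | ε ≤ ξ K ω}ᶜ := by rw [probReal_compl_eq_one_sub hA]; linarith
    _ ≤ μ.real {ω | ξ K ω ≤ ε} := measureReal_mono fun ω (hω : ¬ ε ≤ ξ K ω) => (not_le.1 hω).le
end

section
/- Let {ξ_k}_{k≥0} be a nonnegative nonincreasing sequence of random variables with E[ξ_{k+1} | ξ_k] ≤ ξ_k - ξ_k²/c₁ for all k, where c₁ > 0 and ξ_0 is deterministic. Choose 0 < ε < min(ξ_0, c₁) and ρ ∈ (0,1). Then for any K ≥ (c₁/ε)(1 + ln(1/ρ)) + 2 - c₁/ξ_0, it holds that P(ξ_K ≤ ε) ≥ 1 - ρ. -/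
open MeasureTheory

/-!
Pass to the truncations `ξₖ^ε = ξₖ · 1{ε < ξₖ}` and their means `θₖ`. The event `{ε < ξₖ}` is
`ξₖ`-measurable and contains `{ε < ξₖ₊₁}`, so integrating the conditional decrease over it gives
`θₖ₊₁ ≤ θₖ - E[ξₖ² 1{ε < ξₖ}] / c₁`. The truncated second moment is at least `θₖ²` (Jensen on a
sub-probability measure) and at least `ε θₖ`, hence both `θₖ₊₁ ≤ θₖ - θₖ² / c₁` and
`θₖ₊₁ ≤ (1 - ε / c₁) θₖ`. The first recursion brings `θ` below `ε` within about
`c₁ / ε - c₁ / ξ₀` steps, the second then contracts it to `ε ρ` within `(c₁ / ε) ln (1 / ρ)` more,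
and Markov's inequality `ε P(ε < ξ_K) ≤ θ_K` concludes.
-/

lemma sub_sq_div_le_div_add_one {c a x : ℝ} (hc : 0 < c) (ha : 0 < a) (hx : 0 ≤ x)
    (hax : a * x ≤ c) : x - x ^ 2 / c ≤ c / (a + 1) := by
  rw [sub_div' hc.ne', div_le_div_iff₀ hc (by linarith)]
  nlinarith [sq_nonneg (c - a * x - x), mul_nonneg (mul_nonneg ha.le hx) (sub_nonneg.2 hax),
    mul_nonneg hx (sub_nonneg.2 hax)]

/-- The reciprocal `1 / θ k` grows by at least `1 / c` per step. -/
lemma le_div_add_of_le_sub_sq {θ : ℕ → ℝ} {c θ₀ : ℝ} (hc : 0 < c) (hθ₀ : 0 < θ₀)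
    (h0 : θ 0 ≤ θ₀) (hnn : ∀ k, 0 ≤ θ k) (hstep : ∀ k, θ (k + 1) ≤ θ k - θ k ^ 2 / c)
    (k : ℕ) : θ k ≤ c / (k + c / θ₀) := by
  induction k with
  | zero => simpa [div_div_cancel₀ hc.ne'] using h0
  | succ k ih =>
    have ha : (0 : ℝ) < k + c / θ₀ := by positivity
    have hax : (k + c / θ₀) * θ k ≤ c := by rwa [le_div_iff₀ ha, mul_comm] at ih
    calc θ (k + 1) ≤ θ k - θ k ^ 2 / c := hstep k
      _ ≤ c / (k + c / θ₀ + 1) := sub_sq_div_le_div_add_one hc ha (hnn k) hax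
      _ = c / ((k + 1 : ℕ) + c / θ₀) := by push_cast; ring

lemma le_of_le_sub_sq {θ : ℕ → ℝ} {c θ₀ ε : ℝ} (hc : 0 < c) (hθ₀ : 0 < θ₀) (hε : 0 < ε)
    (h0 : θ 0 ≤ θ₀) (hnn : ∀ k, 0 ≤ θ k) (hstep : ∀ k, θ (k + 1) ≤ θ k - θ k ^ 2 / c)
    {k : ℕ} (hk : c / ε - c / θ₀ ≤ k) : θ k ≤ ε :=
  calc θ k ≤ c / (k + c / θ₀) := le_div_add_of_le_sub_sq hc hθ₀ h0 hnn hstep k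
    _ ≤ c / (c / ε) := by gcongr; linarith
    _ = ε := div_div_cancel₀ hc.ne'

lemma one_sub_pow_le {t ρ : ℝ} {n : ℕ} (ht : t ≤ 1) (hρ : 0 < ρ)
    (hn : Real.log (1 / ρ) ≤ n * t) : (1 - t) ^ n ≤ ρ :=
  calc (1 - t) ^ n ≤ Real.exp (-t) ^ n :=
        pow_le_pow_left₀ (sub_nonneg.2 ht) (Real.one_sub_le_exp_neg t) n
    _ = Real.exp (-(n * t)) := by rw [← Real.exp_nat_mul, mul_neg]
    _ ≤ Real.exp (Real.log ρ) := by
        rw [one_div, Real.log_inv] at hn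
        exact Real.exp_le_exp.2 (by linarith)
    _ = ρ := Real.exp_log hρ

lemma le_mul_of_le_sub_sq_of_le_mul {θ : ℕ → ℝ} {c θ₀ ε ρ : ℝ} (hc : 0 < c) (hε : 0 < ε)
    (hεθ₀ : ε < θ₀) (hεc : ε < c) (hρ₀ : 0 < ρ) (hρ₁ : ρ < 1) (h0 : θ 0 ≤ θ₀)
    (hnn : ∀ k, 0 ≤ θ k) (hsq : ∀ k, θ (k + 1) ≤ θ k - θ k ^ 2 / c)
    (hlin : ∀ k, θ (k + 1) ≤ (1 - ε / c) * θ k) {K : ℕ}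
    (hK : c / ε * (1 + Real.log (1 / ρ)) + 1 - c / θ₀ ≤ K) : θ K ≤ ε * ρ := by
  set k₁ := ⌈c / ε - c / θ₀⌉₊
  have hk₁ : (k₁ : ℝ) < c / ε - c / θ₀ + 1 :=
    Nat.ceil_lt_add_one (sub_nonneg.2 (div_le_div_of_nonneg_left hc.le hε hεθ₀.le))
  have hlog : 0 ≤ c / ε * Real.log (1 / ρ) :=
    mul_nonneg (by positivity) (Real.log_nonneg (one_le_one_div hρ₀ hρ₁.le))
  have hk₁K : k₁ ≤ K := by exact_mod_cast (show (k₁ : ℝ) ≤ K by linarith)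
  obtain ⟨n, rfl⟩ := Nat.exists_eq_add_of_le hk₁K
  have hn : c / ε * Real.log (1 / ρ) ≤ n := by
    push_cast at hK
    linarith [mul_one_add (c / ε) (Real.log (1 / ρ))]
  replace hn : Real.log (1 / ρ) ≤ n * (ε / c) :=
    calc Real.log (1 / ρ) = c / ε * Real.log (1 / ρ) * (ε / c) := by field_simp
      _ ≤ n * (ε / c) := by gcongr
  have hεc' : ε / c ≤ 1 := (div_le_one hc).2 hεc.le
  calc θ (k₁ + n) ≤ (1 - ε / c) ^ n * θ k₁ :=
        le_geom (u := fun m => θ (k₁ + m)) (sub_nonneg.2 hεc') n fun m _ => hlin (k₁ + m)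
    _ ≤ ρ * ε := mul_le_mul (one_sub_pow_le hεc' hρ₀ hn)
        (le_of_le_sub_sq hc (hε.trans hεθ₀) hε h0 hnn hsq (Nat.le_ceil _)) (hnn _) hρ₀.le
    _ = ε * ρ := mul_comm _ _

lemma setIntegral_le_of_condExp_le {Ω : Type*} {m m₀ : MeasurableSpace Ω} {μ : Measure[m₀] Ω}
    (hm : m ≤ m₀) [SigmaFinite (μ.trim hm)] {f g : Ω → ℝ} (hf : Integrable f μ)
    (hg : Integrable g μ) (hfg : μ[f | m] ≤ᵐ[μ] g)
    {s : Set Ω} (hs : MeasurableSet[m] s) : ∫ ω in s, f ω ∂μ ≤ ∫ ω in s, g ω ∂μ :=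
  (setIntegral_condExp hm hf hs).symm.trans_le
    (setIntegral_mono_ae integrable_condExp.integrableOn hg.integrableOn hfg)

section Probability

variable {Ω : Type*} [MeasurableSpace Ω] {μ : Measure Ω}

lemma integrable_of_nonneg_of_le [IsFiniteMeasure μ] {X : Ω → ℝ} {C : ℝ} (hX : Measurable X)
    (h0 : ∀ ω, 0 ≤ X ω) (hC : ∀ ω, X ω ≤ C) : Integrable X μ :=
  .of_bound hX.aestronglyMeasurable C
    (ae_of_all _ fun ω => (Real.norm_of_nonneg (h0 ω)).trans_le (hC ω))

lemma sq_integral_le_integral_sq [IsFiniteMeasure μ] (hμ : μ.real Set.univ ≤ 1) {f : Ω → ℝ}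
    (hf : Integrable f μ) (hf2 : Integrable (fun ω => f ω ^ 2) μ) :
    (∫ ω, f ω ∂μ) ^ 2 ≤ ∫ ω, f ω ^ 2 ∂μ := by
  set m := ∫ ω, f ω ∂μ
  -- integrate the tangent line of `x ↦ x ^ 2` at `m`
  have h : ∫ ω, (2 * m * f ω - m ^ 2) ∂μ ≤ ∫ ω, f ω ^ 2 ∂μ :=
    integral_mono ((hf.const_mul _).sub (integrable_const _)) hf2 fun ω => by
      nlinarith [sq_nonneg (f ω - m)]
  rw [integral_sub (hf.const_mul _) (integrable_const _), integral_const_mul, integral_const,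
    smul_eq_mul] at h
  nlinarith [sq_nonneg m]

/-- The mean `E[X^ε]` of the truncation `X^ε = X · 1{ε < X}`. -/
noncomputable def truncatedMean (μ : Measure Ω) (ε : ℝ) (X : Ω → ℝ) : ℝ :=
  ∫ ω in {ω | ε < X ω}, X ω ∂μ

variable {ε : ℝ} {X Y : Ω → ℝ}

lemma truncatedMean_nonneg (hX : ∀ ω, 0 ≤ X ω) : 0 ≤ truncatedMean μ ε X :=
  setIntegral_nonneg_of_ae (ae_of_all _ hX)

lemma truncatedMean_le_integral (hXi : Integrable X μ) (hX : ∀ ω, 0 ≤ X ω) :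
    truncatedMean μ ε X ≤ ∫ ω, X ω ∂μ :=
  setIntegral_le_integral hXi (ae_of_all _ hX)

lemma mul_measureReal_lt_le_truncatedMean [IsFiniteMeasure μ] (hXi : Integrable X μ)
    (hX : Measurable X) : ε * μ.real {ω | ε < X ω} ≤ truncatedMean μ ε X := by
  have h := setIntegral_mono_on (integrable_const ε).integrableOn hXi.integrableOn
    (measurableSet_lt measurable_const hX) fun ω (hω : ε < X ω) => hω.le
  rwa [setIntegral_const, smul_eq_mul, mul_comm] at h

lemma sq_truncatedMean_le [IsProbabilityMeasure μ] (hXi : Integrable X μ)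
    (hX2 : Integrable (fun ω => X ω ^ 2) μ) :
    truncatedMean μ ε X ^ 2 ≤ ∫ ω in {ω | ε < X ω}, X ω ^ 2 ∂μ :=
  sq_integral_le_integral_sq (by rw [measureReal_restrict_apply_univ]; exact measureReal_le_one)
    hXi.integrableOn hX2.integrableOn

lemma mul_truncatedMean_le (hε : 0 ≤ ε) (hX : Measurable X) (hXi : Integrable X μ)
    (hX2 : Integrable (fun ω => X ω ^ 2) μ) :
    ε * truncatedMean μ ε X ≤ ∫ ω in {ω | ε < X ω}, X ω ^ 2 ∂μ := by
  rw [truncatedMean, ← integral_const_mul]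
  refine setIntegral_mono_on (hXi.const_mul ε).integrableOn hX2.integrableOn
    (measurableSet_lt measurable_const hX) fun ω (hω : ε < X ω) => ?_
  nlinarith

lemma truncatedMean_le_sub_setIntegral_sq [IsFiniteMeasure μ] {c : ℝ} (hX : Measurable X)
    (hXi : Integrable X μ) (hX2 : Integrable (fun ω => X ω ^ 2) μ) (hYi : Integrable Y μ)
    (hY : ∀ ω, 0 ≤ Y ω) (hYX : ∀ ω, Y ω ≤ X ω)
    (hcond : ∀ᵐ ω ∂μ, μ[Y | MeasurableSpace.comap X Real.measurableSpace] ω ≤ X ω - X ω ^ 2 / c) :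
    truncatedMean μ ε Y ≤ truncatedMean μ ε X - (∫ ω in {ω | ε < X ω}, X ω ^ 2 ∂μ) / c := by
  have hB : MeasurableSet[MeasurableSpace.comap X Real.measurableSpace] {ω | ε < X ω} :=
    ⟨Set.Ioi ε, measurableSet_Ioi, rfl⟩
  calc truncatedMean μ ε Y ≤ ∫ ω in {ω | ε < X ω}, Y ω ∂μ :=
        setIntegral_mono_set hYi.integrableOn (ae_of_all _ hY)
          (LE.le.eventuallyLE fun ω (h : ε < Y ω) => h.trans_le (hYX ω))
    _ ≤ ∫ ω in {ω | ε < X ω}, (X ω - X ω ^ 2 / c) ∂μ :=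
        setIntegral_le_of_condExp_le hX.comap_le hYi (hXi.sub (hX2.div_const c)) hcond hB
    _ = _ := by
        rw [integral_sub hXi.integrableOn (hX2.div_const c).integrableOn, integral_div]
        rfl

end Probability

/-- Sublinear-rate high-probability lemma: a nonnegative nonincreasing sequence of random
variables with conditional decrease `E[ξ_{k+1}|ξ_k] ≤ ξ_k - ξ_k²/c₁` satisfies
`P(ξ_K ≤ ε) ≥ 1 - ρ` for `K ≥ (c₁/ε)(1 + ln(1/ρ)) + 2 - c₁/ξ₀`. -/
theorem stmt_15 {Ω : Type*} [MeasurableSpace Ω] (μ : Measure Ω) [IsProbabilityMeasure μ]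
    (ξ : ℕ → Ω → ℝ) (hmeas : ∀ k, Measurable (ξ k))
    (ξ0 c₁ ε ρ : ℝ)
    (hdet : ∀ ω, ξ 0 ω = ξ0)
    (hnonneg : ∀ k ω, 0 ≤ ξ k ω)
    (hmono : ∀ k ω, ξ (k + 1) ω ≤ ξ k ω)
    (hc₁ : 0 < c₁) (hε : 0 < ε) (hεξ0 : ε < ξ0) (hεc₁ : ε < c₁)
    (hcond : ∀ k, ∀ᵐ ω ∂μ,
      (μ[ξ (k + 1) | MeasurableSpace.comap (ξ k) Real.measurableSpace]) ω
        ≤ ξ k ω - (ξ k ω) ^ 2 / c₁)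
    (hρ : ρ ∈ Set.Ioo (0 : ℝ) 1)
    (K : ℕ) (hK : (K : ℝ) ≥ c₁ / ε * (1 + Real.log (1 / ρ)) + 2 - c₁ / ξ0) :
    1 - ρ ≤ (μ {ω | ξ K ω ≤ ε}).toReal := by
  have hbd k ω : ξ k ω ≤ ξ0 := hdet ω ▸ antitone_nat_of_succ_le (f := (ξ · ω)) (hmono · ω) k.zero_le
  have hint k : Integrable (ξ k) μ := integrable_of_nonneg_of_le (hmeas k) (hnonneg k) (hbd k)
  have hint2 k : Integrable (fun ω => ξ k ω ^ 2) μ :=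
    integrable_of_nonneg_of_le ((hmeas k).pow_const 2) (fun ω => sq_nonneg _)
      fun ω => pow_le_pow_left₀ (hnonneg k ω) (hbd k ω) 2
  have hstep k := truncatedMean_le_sub_setIntegral_sq (ε := ε) (hmeas k) (hint k) (hint2 k)
    (hint (k + 1)) (hnonneg (k + 1)) (hmono k) (hcond k)
  have hθK : truncatedMean μ ε (ξ K) ≤ ε * ρ :=
    le_mul_of_le_sub_sq_of_le_mul hc₁ hε hεξ0 hεc₁ hρ.1 hρ.2
      ((truncatedMean_le_integral (hint 0) (hnonneg 0)).trans (by simp [hdet]))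
      (fun k => truncatedMean_nonneg (hnonneg k))
      (fun k => (hstep k).trans (by gcongr; exact sq_truncatedMean_le (hint k) (hint2 k)))
      (fun k => (hstep k).trans (by
        rw [one_sub_mul, div_mul_eq_mul_div]
        gcongr
        exact mul_truncatedMean_le hε.le (hmeas k) (hint k) (hint2 k)))
      (by linarith)
  have htail : μ.real {ω | ε < ξ K ω} ≤ ρ :=
    le_of_mul_le_mul_left ((mul_measureReal_lt_le_truncatedMean (hint K) (hmeas K)).trans hθK) hε
  have hcompl : {ω | ξ K ω ≤ ε} = {ω | ε < ξ K ω}ᶜ := by ext; simp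
  rw [← measureReal_def, hcompl,
    probReal_compl_eq_one_sub (measurableSet_lt measurable_const (hmeas K))]
  linarith
end
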